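/- A metric space X admits a bi-Lipschitz embedding into c₀(κ) for some cardinal κ if and only if there exists C ∈ [0,∞) such that Δ_X^{(c)}(R) ≤ CR for all R ∈ [0,∞); and X admits a coarse Lipschitz embedding into some c₀(κ) if and only if there exist C, D ∈ [0,∞) with Δ_X^{(c)}(R) ≤ CR + D for all R. -/

import Mathlib

open ENNReal NNReal Set Filter ZeroAtInfty

/-- `U` is a cover of the space. -/
def IsCover {X : Type*} (U : Set (Set X)) : Prop := ⋃₀ U = Set.univ

/-- `U` is point-finite: every point lies in only finitely many members. -/
def PointFinite {X : Type*} (U : Set (Set X)) : Prop :=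
  ∀ x : X, {V | V ∈ U ∧ x ∈ V}.Finite

/-- The Lebesgue number of a family of sets. -/
noncomputable def Leb {X : Type*} [PseudoMetricSpace X] (U : Set (Set X)) : ℝ≥0∞ :=
  sSup {d : ℝ≥0∞ | ∀ E : Set X, EMetric.diam E < d → ∃ V ∈ U, E ⊆ V}

/-- The diameter of a family of sets: the sup of the diameters of its members. -/
noncomputable def covDiam {X : Type*} [PseudoMetricSpace X] (U : Set (Set X)) : ℝ≥0∞ :=
  ⨆ V ∈ U, EMetric.diam V

/-- The modulus `Δ_X^{(c)}`. -/
noncomputable def Δc (X : Type*) [PseudoMetricSpace X] (R : ℝ≥0∞) : ℝ≥0∞ :=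
  ⨅ U ∈ {U : Set (Set X) | IsCover U ∧ PointFinite U ∧ R ≤ Leb U}, covDiam U

/-- The modulus `Δ_X^{(u)}`. -/
noncomputable def Δu (X : Type*) [PseudoMetricSpace X] (r : ℝ≥0∞) : ℝ≥0∞ :=
  ⨆ U ∈ {U : Set (Set X) | IsCover U ∧ PointFinite U ∧ covDiam U ≤ r}, Leb U

/-- The density character: the least cardinality of a dense subset. -/
noncomputable def densChar (X : Type*) [TopologicalSpace X] : Cardinal :=
  sInf {c : Cardinal | ∃ s : Set X, Dense s ∧ Cardinal.mk s = c}

/-- The modulus of continuity (expansion) of a map. -/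
noncomputable def omegaMod {X Y : Type*} [PseudoMetricSpace X] [PseudoMetricSpace Y]
    (f : X → Y) (t : ℝ) : ℝ≥0∞ :=
  ⨆ p ∈ {p : X × X | dist p.1 p.2 ≤ t}, edist (f p.1) (f p.2)

/-- The modulus of compression of a map. -/
noncomputable def rhoMod {X Y : Type*} [PseudoMetricSpace X] [PseudoMetricSpace Y]
    (f : X → Y) (t : ℝ) : ℝ≥0∞ :=
  ⨅ p ∈ {p : X × X | t ≤ dist p.1 p.2}, edist (f p.1) (f p.2)

/-- `c₀(ι)`: real-valued functions on the discrete space `ι` vanishing at infinity,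
with the sup-norm metric. -/
def c0Space (ι : Type*) : Type _ :=
  letI : TopologicalSpace ι := ⊥
  C₀(ι, ℝ)

noncomputable instance c0Space.metricSpace (ι : Type*) : MetricSpace (c0Space ι) :=
  letI : TopologicalSpace ι := ⊥
  (inferInstance : MetricSpace C₀(ι, ℝ))

instance c0Space.funLike (ι : Type*) : FunLike (c0Space ι) ι ℝ :=
  letI : TopologicalSpace ι := ⊥
  (inferInstance : FunLike C₀(ι, ℝ) ι ℝ)

/-- The positive cone `c₀⁺(ι)` with the inherited metric. -/
abbrev c0Pos (ι : Type*) : Type _ := {g : c0Space ι // ∀ i, 0 ≤ g i}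

universe u

/-!
The space `c₀(κ)` itself has linear `Δ^{(c)}`: at scale `r`, the cells
`{g | g i / r ∈ window (k i) for all i}`, indexed by finitely supported labels `k`, form a
point-finite cover with Lebesgue number `r` and diameter `8r`. Pulling these cells back along a
(coarse) Lipschitz embedding bounds `Δ_X^{(c)}` linearly.

Conversely, a linear bound provides for every `n : ℤ` a point-finite cover `U n` whose members
contain the balls of radius `2ⁿ` and have diameter `≲ C 2ⁿ + D`. The `1`-Lipschitz coordinates
`x ↦ min (2ⁿ, d(x, X \ V), d(x, B̄(x₀, 2ⁿ)))`, `V ∈ U n`, embed `X` into `c₀`: for `d(x, y) = t`,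
at the scale `2ⁿ ≈ t / C` the member of `U n` containing `B(x, 2ⁿ)` misses `y`, so that coordinate
separates `x` and `y` by about `t / C`.
-/

theorem pointFinite_range {X κ : Type*} {s : κ → Set X} (hs : ∀ x, {k | x ∈ s k}.Finite) :
    PointFinite (range s) := by
  intro x
  refine ((hs x).image s).subset ?_
  rintro _ ⟨⟨k, rfl⟩, hx⟩
  exact ⟨k, hx, rfl⟩

theorem IsCover.preimage {X Y : Type*} {V : Set (Set Y)} (hV : IsCover V) (f : X → Y) :
    IsCover ((f ⁻¹' ·) '' V) := by
  refine eq_univ_of_forall fun x => ?_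
  obtain ⟨W, hW, hx⟩ : f x ∈ ⋃₀ V := hV ▸ mem_univ _
  exact ⟨f ⁻¹' W, mem_image_of_mem _ hW, hx⟩

theorem PointFinite.preimage {X Y : Type*} {V : Set (Set Y)} (hV : PointFinite V) (f : X → Y) :
    PointFinite ((f ⁻¹' ·) '' V) := by
  intro x
  refine ((hV (f x)).image (f ⁻¹' ·)).subset ?_
  rintro _ ⟨⟨W, hW, rfl⟩, hx⟩
  exact ⟨W, ⟨hW, hx⟩, rfl⟩

namespace c0Space

variable {ι : Type*}

theorem dist_apply_le (f g : c0Space ι) (i : ι) : dist (f i) (g i) ≤ dist f g := by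
  let _ : TopologicalSpace ι := ⊥
  exact BoundedContinuousFunction.dist_coe_le_dist (f := ZeroAtInftyContinuousMap.toBCF f)
    (g := ZeroAtInftyContinuousMap.toBCF g) i

theorem dist_le_of_forall {f g : c0Space ι} {C : ℝ} (hC : 0 ≤ C)
    (h : ∀ i, dist (f i) (g i) ≤ C) : dist f g ≤ C := by
  let _ : TopologicalSpace ι := ⊥
  exact (BoundedContinuousFunction.dist_le (f := ZeroAtInftyContinuousMap.toBCF f)
    (g := ZeroAtInftyContinuousMap.toBCF g) hC).2 h

theorem finite_setOf_le_abs (g : c0Space ι) {ε : ℝ} (hε : 0 < ε) :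
    {i | ε ≤ |g i|}.Finite := by
  let _ : TopologicalSpace ι := ⊥
  have : DiscreteTopology ι := ⟨rfl⟩
  have hg := (g : C₀(ι, ℝ)).zero_at_infty'
  rw [cocompact_eq_cofinite, Metric.tendsto_nhds] at hg
  refine (eventually_cofinite.1 (hg ε hε)).subset fun i hi => ?_
  simp only [mem_ofPred_eq, Real.dist_eq, sub_zero, not_lt]
  exact hi

noncomputable def mk (g : ι → ℝ) (hg : ∀ ε > 0, {i | ε ≤ |g i|}.Finite) : c0Space ι :=
  letI : TopologicalSpace ι := ⊥
  haveI : DiscreteTopology ι := ⟨rfl⟩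
  (⟨⟨g, continuous_of_discreteTopology⟩, by
    rw [cocompact_eq_cofinite, Metric.tendsto_nhds]
    intro ε hε
    exact eventually_cofinite.2 (by simpa [Real.dist_eq] using hg ε hε)⟩ : C₀(ι, ℝ))

@[simp]
theorem mk_apply (g : ι → ℝ) (hg : ∀ ε > 0, {i | ε ≤ |g i|}.Finite) (i : ι) :
    mk g hg i = g i := rfl

/-- The windows covering a coordinate: every window other than the central one avoids
`(-1, 1)`, so a point of `c₀` lies in a non-central window in only finitely many coordinates. -/
def window (k : ℤ) : Set ℝ :=
  if k = 0 then Icc (-4) 4 else if 0 < k then Icc k (k + 3) else Icc (k - 3) k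

theorem one_le_abs_of_mem_window {k : ℤ} {x : ℝ} (hk : k ≠ 0) (hx : x ∈ window k) :
    1 ≤ |x| := by
  unfold window at hx
  rw [if_neg hk] at hx
  split_ifs at hx with hpos
  · have : (1 : ℝ) ≤ k := by exact_mod_cast hpos
    exact le_abs.2 (Or.inl (this.trans hx.1))
  · have : (k : ℝ) ≤ -1 := by exact_mod_cast (by omega : k ≤ -1)
    exact le_abs.2 (Or.inr (by linarith [hx.2]))

theorem abs_sub_le_of_mem_window {k : ℤ} {x y : ℝ} (hx : x ∈ window k) (hy : y ∈ window k) :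
    |x - y| ≤ 8 := by
  unfold window at hx hy
  split_ifs at hx hy <;>
    exact abs_le.2 ⟨by linarith [hx.1, hx.2, hy.1, hy.2], by linarith [hx.1, hx.2, hy.1, hy.2]⟩

theorem finite_setOf_mem_window (x : ℝ) : {k : ℤ | x ∈ window k}.Finite := by
  refine ((Set.finite_Icc ⌈x - 3⌉ ⌊x + 3⌋).insert 0).subset fun k hk => ?_
  rcases eq_or_ne k 0 with rfl | hk0
  · exact mem_insert _ _
  refine mem_insert_of_mem _ ⟨Int.ceil_le.2 ?_, Int.le_floor.2 ?_⟩ <;>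
  · simp only [mem_ofPred_eq, window, if_neg hk0] at hk
    split_ifs at hk <;> linarith [hk.1, hk.2]

theorem exists_Icc_subset_window (a : ℝ) :
    ∃ k : ℤ, Icc (a - 1) (a + 1) ⊆ window k ∧ (|a| < 3 → k = 0) := by
  rcases lt_or_ge |a| 3 with ha | ha
  · refine ⟨0, fun x hx => ?_, fun _ => rfl⟩
    simp only [window, if_pos]
    obtain ⟨h1, h2⟩ := abs_lt.1 ha
    exact ⟨by linarith [hx.1], by linarith [hx.2]⟩
  rcases le_abs'.1 ha with ha | ha
  · have hc : ⌈a⌉ ≤ -3 := Int.ceil_le.2 (by push_cast; linarith)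
    have hk : ⌈a⌉ + 1 ≠ 0 := by omega
    refine ⟨⌈a⌉ + 1, fun x hx => ?_, fun h => absurd h (by linarith)⟩
    have h1 := Int.le_ceil a
    have h2 := Int.ceil_lt_add_one a
    simp only [window, if_neg hk, if_neg (by omega : ¬0 < ⌈a⌉ + 1)]
    push_cast
    exact ⟨by linarith [hx.1], by linarith [hx.2]⟩
  · have h1 := Int.floor_le a
    have h2 := Int.lt_floor_add_one a
    have hpos : 0 < ⌊a⌋ - 1 := by
      have : 3 ≤ ⌊a⌋ := Int.le_floor.2 (by push_cast; linarith)
      omega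
    refine ⟨⌊a⌋ - 1, fun x hx => ?_, fun h => absurd h (by linarith)⟩
    simp only [window, if_neg hpos.ne', if_pos hpos]
    push_cast
    exact ⟨by linarith [hx.1], by linarith [hx.2]⟩

def cell (r : ℝ) (k : ι →₀ ℤ) : Set (c0Space ι) := {g | ∀ i, g i / r ∈ window (k i)}

theorem exists_subset_cell {r : ℝ} (hr : 0 < r) {E : Set (c0Space ι)}
    (hE : Metric.ediam E ≤ ENNReal.ofReal r) : ∃ k, E ⊆ cell r k := by
  rcases E.eq_empty_or_nonempty with rfl | ⟨f₀, hf₀⟩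
  · exact ⟨0, empty_subset _⟩
  choose K hK using fun i => exists_Icc_subset_window (f₀ i / r)
  have hsupp : (Function.support K).Finite := by
    refine (finite_setOf_le_abs f₀ (by positivity : 0 < 3 * r)).subset fun i hi => ?_
    by_contra hlt
    refine hi ((hK i).2 ?_)
    rw [abs_div, abs_of_pos hr, div_lt_iff₀ hr]
    exact lt_of_not_ge hlt
  refine ⟨Finsupp.ofSupportFinite K hsupp, fun g hg i => (hK i).1 ?_⟩
  have hdist : |g i / r - f₀ i / r| ≤ 1 := by
    rw [div_sub_div_same, abs_div, abs_of_pos hr, div_le_one hr, ← Real.dist_eq]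
    refine (dist_apply_le g f₀ i).trans ?_
    exact (edist_le_ofReal hr.le).1 ((Metric.edist_le_ediam_of_mem hg hf₀).trans hE)
  obtain ⟨h1, h2⟩ := abs_le.1 hdist
  constructor <;> linarith

theorem finite_setOf_mem_cell {r : ℝ} (hr : 0 < r) (g : c0Space ι) :
    {k : ι →₀ ℤ | g ∈ cell r k}.Finite := by
  classical
  refine ((finite_setOf_le_abs g hr).toFinset.finsupp
    fun i => (finite_setOf_mem_window (g i / r)).toFinset).finite_toSet.subset fun k hk => ?_
  refine Finset.mem_finsupp_iff.2 ⟨fun i hi => ?_, fun i _ => by simpa using hk i⟩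
  have h := one_le_abs_of_mem_window (Finsupp.mem_support_iff.1 hi) (hk i)
  rw [abs_div, abs_of_pos hr, one_le_div hr] at h
  simpa using h

theorem dist_le_of_mem_cell {r : ℝ} (hr : 0 < r) {k : ι →₀ ℤ} {g h : c0Space ι}
    (hg : g ∈ cell r k) (hh : h ∈ cell r k) : dist g h ≤ 8 * r := by
  refine dist_le_of_forall (by positivity) fun i => ?_
  have := abs_sub_le_of_mem_window (hg i) (hh i)
  rwa [div_sub_div_same, abs_div, abs_of_pos hr, div_le_iff₀ hr, ← Real.dist_eq] at this

theorem isCover_range_cell {r : ℝ} (hr : 0 < r) : IsCover (range (cell (ι := ι) r)) := by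
  refine eq_univ_of_forall fun g => ?_
  obtain ⟨k, hk⟩ := exists_subset_cell hr (E := {g}) (Metric.ediam_singleton.trans_le zero_le)
  exact ⟨_, mem_range_self k, hk rfl⟩

end c0Space

section Cover

variable {X Y : Type*} [PseudoMetricSpace X] [PseudoMetricSpace Y]

theorem exists_subset_of_ediam_lt_Leb {U : Set (Set X)} {E : Set X}
    (hE : Metric.ediam E < Leb U) : ∃ V ∈ U, E ⊆ V := by
  obtain ⟨d, hd, hlt⟩ := lt_sSup_iff.1 hE
  exact hd E hlt

theorem Δc_le_covDiam {U : Set (Set X)} (hU : IsCover U) (hpf : PointFinite U) {R : ℝ≥0∞}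
    (hR : R ≤ Leb U) : Δc X R ≤ covDiam U :=
  iInf₂_le U ⟨hU, hpf, hR⟩

theorem exists_cover_of_Δc_lt {R d : ℝ≥0∞} (h : Δc X R < d) :
    ∃ U : Set (Set X), IsCover U ∧ PointFinite U ∧ R ≤ Leb U ∧ covDiam U < d := by
  simpa only [Δc, iInf_lt_iff, mem_ofPred_eq, exists_prop, and_assoc] using h

theorem dist_le_of_covDiam_le {U : Set (Set X)} {t : ℝ} (ht : 0 ≤ t)
    (hU : covDiam U ≤ ENNReal.ofReal t) {V : Set X} (hV : V ∈ U) {x y : X} (hx : x ∈ V)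
    (hy : y ∈ V) : dist x y ≤ t :=
  (edist_le_ofReal ht).1 <| (Metric.edist_le_ediam_of_mem hx hy).trans <|
    (le_iSup₂ (f := fun V (_ : V ∈ U) => Metric.ediam V) V hV).trans hU

theorem Δc_zero : Δc X 0 = 0 := by
  have hcov : IsCover (range fun x : X => ({x} : Set X)) :=
    eq_univ_of_forall fun x => ⟨{x}, mem_range_self x, rfl⟩
  have hpf : PointFinite (range fun x : X => ({x} : Set X)) :=
    pointFinite_range fun x => (finite_singleton x).subset fun y hy => hy.symm
  refine le_antisymm ((Δc_le_covDiam hcov hpf zero_le).trans ?_) zero_le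
  refine iSup₂_le ?_
  rintro _ ⟨x, rfl⟩
  exact Metric.ediam_singleton.le

theorem Δc_le_of_comap (f : X → Y) {V : Set (Set Y)} (hV : IsCover V) (hpf : PointFinite V)
    {r : ℝ} (hleb : ∀ E, Metric.ediam E ≤ ENNReal.ofReal r → ∃ W ∈ V, E ⊆ W)
    {R : ℝ≥0} (hf : ∀ x y, dist x y < R → dist (f x) (f y) ≤ r) {t : ℝ}
    (ht : ∀ W ∈ V, ∀ x y, f x ∈ W → f y ∈ W → dist x y ≤ t) :
    Δc X R ≤ ENNReal.ofReal t := by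
  refine (Δc_le_covDiam (hV.preimage f) (hpf.preimage f) (le_sSup fun E hE => ?_)).trans ?_
  · have hfE : Metric.ediam (f '' E) ≤ ENNReal.ofReal r := by
      refine Metric.ediam_le_of_forall_dist_le ?_
      rintro _ ⟨x, hx, rfl⟩ _ ⟨y, hy, rfl⟩
      refine hf x y ?_
      have := (Metric.edist_le_ediam_of_mem hx hy).trans_lt hE
      rwa [edist_dist, ← ENNReal.ofReal_coe_nnreal, ENNReal.ofReal_lt_ofReal_iff_of_nonneg
        dist_nonneg] at this
    obtain ⟨W, hW, hEW⟩ := hleb _ hfE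
    exact ⟨f ⁻¹' W, mem_image_of_mem _ hW, image_subset_iff.1 hEW⟩
  · refine iSup₂_le ?_
    rintro _ ⟨W, hW, rfl⟩
    exact Metric.ediam_le_of_forall_dist_le fun x hx y hy => ht W hW x y hx hy

end Cover

theorem Δc_le_of_coarseEmbedding_c0Space {X ι : Type*} [PseudoMetricSpace X]
    (f : X → c0Space ι) {A B : ℝ} (hA : 0 < A) (hB : 0 ≤ B)
    (hf : ∀ x y, (1 / A) * dist x y - B ≤ dist (f x) (f y) ∧
      dist (f x) (f y) ≤ A * dist x y + B) (R : ℝ≥0) :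
    Δc X R ≤ (((8 * A ^ 2).toNNReal * R + (9 * A * B).toNNReal : ℝ≥0) : ℝ≥0∞) := by
  rcases (by positivity : 0 ≤ A * R + B).eq_or_lt with hr | hr
  · have hR : R = 0 := by
      have : (R : ℝ) = 0 := by nlinarith [R.coe_nonneg]
      exact_mod_cast this
    simp [hR, Δc_zero]
  have hbound : Δc X R ≤ ENNReal.ofReal (A * (8 * (A * R + B) + B)) := by
    refine Δc_le_of_comap f (r := A * R + B) (c0Space.isCover_range_cell hr)
      (pointFinite_range fun g => c0Space.finite_setOf_mem_cell hr g)
      (fun E hE => ?_) (fun x y hxy => ?_) ?_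
    · obtain ⟨k, hk⟩ := c0Space.exists_subset_cell hr hE
      exact ⟨_, mem_range_self k, hk⟩
    · nlinarith [(hf x y).2]
    · rintro _ ⟨k, rfl⟩ x y hx hy
      have h1 := (hf x y).1
      have h2 := c0Space.dist_le_of_mem_cell hr hx hy
      rw [one_div, inv_mul_eq_div, sub_le_iff_le_add, div_le_iff₀ hA] at h1
      nlinarith
  refine hbound.trans_eq ?_
  rw [← ENNReal.ofReal_coe_nnreal]
  congr 1
  push_cast [Real.coe_toNNReal _ (by positivity : 0 ≤ 8 * A ^ 2),
    Real.coe_toNNReal _ (by positivity : 0 ≤ 9 * A * B)]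
  ring

section Bump

variable {X : Type*} [PseudoMetricSpace X] (x₀ : X)

/-- The coordinate attached to a member `V` of a cover at scale `s`. It vanishes off `V`, and the
factor `infDist x (closedBall x₀ s)` makes it vanish at small scales far from `x₀` too, so that
every point has only finitely many nonzero coordinates. -/
noncomputable def bump (s : ℝ) (V : Set X) (x : X) : ℝ :=
  min (min s (Metric.infDist x Vᶜ)) (Metric.infDist x (Metric.closedBall x₀ s))

variable {x₀}

theorem bump_nonneg {s : ℝ} (hs : 0 ≤ s) (V : Set X) (x : X) : 0 ≤ bump x₀ s V x :=
  le_min (le_min hs Metric.infDist_nonneg) Metric.infDist_nonneg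

theorem lipschitzWith_bump (s : ℝ) (V : Set X) : LipschitzWith 1 (bump x₀ s V) := by
  have h : LipschitzWith (max (max 0 1) 1) (bump x₀ s V) :=
    ((LipschitzWith.const s).min (Metric.lipschitz_infDist_pt Vᶜ)).min
      (Metric.lipschitz_infDist_pt (Metric.closedBall x₀ s))
  simpa only [zero_le_one, max_eq_right, max_self] using h

theorem bump_eq_zero {s : ℝ} (hs : 0 ≤ s) {V : Set X} {x : X} (hx : x ∉ V) :
    bump x₀ s V x = 0 := by
  rw [bump, Metric.infDist_zero_of_mem (mem_compl hx), min_eq_right hs]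
  exact min_eq_left Metric.infDist_nonneg

theorem bump_le (s : ℝ) (V : Set X) (x : X) : bump x₀ s V x ≤ s :=
  (min_le_left _ _).trans (min_le_left _ _)

theorem lt_dist_of_bump_pos {s : ℝ} {V : Set X} {x : X} (h : 0 < bump x₀ s V x) :
    s < dist x x₀ := by
  by_contra hle
  have hx : x ∈ Metric.closedBall x₀ s := Metric.mem_closedBall.2 (not_lt.1 hle)
  exact (h.trans_le (min_le_right _ _)).ne' (Metric.infDist_zero_of_mem hx)

theorem le_bump {s : ℝ} (hs : 0 ≤ s) {V : Set X} {x : X} (hV : Metric.ball x s ⊆ V)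
    (hne : Vᶜ.Nonempty) (hx : 2 * s ≤ dist x x₀) : s ≤ bump x₀ s V x := by
  refine le_min (le_min le_rfl ((Metric.le_infDist hne).2 fun y hy => ?_))
    ((Metric.le_infDist ⟨x₀, Metric.mem_closedBall_self hs⟩).2 fun z hz => ?_)
  · by_contra hlt
    exact hy (hV (Metric.mem_ball'.2 (lt_of_not_ge hlt)))
  · linarith [dist_triangle x z x₀, Metric.mem_closedBall.1 hz]

variable (x₀)

theorem finite_setOf_le_bump {U : ℤ → Set (Set X)} (hU : ∀ n, PointFinite (U n)) (x : X)
    {ε : ℝ} (hε : 0 < ε) :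
    {i : Σ n, U n | ε ≤ bump x₀ (2 ^ i.1) i.2 x}.Finite := by
  have hfin : ∀ n, {V : U n | x ∈ (V : Set X)}.Finite := fun n =>
    ((hU n x).preimage Subtype.val_injective.injOn).subset fun V hV => ⟨V.2, hV⟩
  refine ((finite_Icc (Int.clog 2 ε) (Int.clog 2 (dist x x₀))).biUnion
    fun n _ => (hfin n).image (Sigma.mk n)).subset ?_
  rintro ⟨n, V⟩ hi
  have hpos := hε.trans_le hi
  have hlt := lt_dist_of_bump_pos hpos
  have hxV : x ∈ (V : Set X) := by
    by_contra hxV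
    exact hpos.ne' (bump_eq_zero (zpow_pos two_pos n).le hxV)
  refine mem_biUnion (x := n) ⟨?_, ?_⟩ ⟨V, hxV, rfl⟩
  · exact (Int.le_zpow_iff_clog_le (R := ℝ) (b := 2) one_lt_two hε).1
      (by exact_mod_cast hi.trans (bump_le _ _ _))
  · exact ((Int.zpow_lt_iff_lt_clog (R := ℝ) (b := 2) one_lt_two
      ((zpow_pos two_pos n).trans hlt)).1 (by exact_mod_cast hlt)).le

end Bump

/-- The scale `2 ^ n` is chosen just below `(dist x y - D) / C`, so that no member of `U n`
contains both `x` and `y`. -/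
theorem exists_le_bump_sub_bump {X : Type*} [PseudoMetricSpace X] {C D : ℝ}
    {U : ℤ → Set (Set X)} (x₀ : X) (hC : 4 ≤ C) (hD₀ : 0 ≤ D)
    (hball : ∀ n x, ∃ V ∈ U n, Metric.ball x (2 ^ n) ⊆ V)
    (hdiam : ∀ n, ∀ V ∈ U n, ∀ x ∈ V, ∀ y ∈ V, dist x y ≤ C * 2 ^ n + D) {x y : X}
    (hxy : dist y x₀ ≤ dist x x₀) (hD : D < dist x y) :
    ∃ n, ∃ V ∈ U n, (dist x y - D) / (2 * C) ≤ bump x₀ (2 ^ n) V x - bump x₀ (2 ^ n) V y := by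
  have hCpos : 0 < C := by linarith
  obtain ⟨n, hn1, hn2⟩ := exists_mem_Ioc_zpow (div_pos (sub_pos.2 hD) hCpos) one_lt_two
  rw [lt_div_iff₀ hCpos] at hn1
  rw [div_le_iff₀ hCpos, zpow_add_one₀ two_ne_zero] at hn2
  obtain ⟨V, hV, hballV⟩ := hball n x
  have hpos : (0 : ℝ) < 2 ^ n := zpow_pos two_pos n
  have hyV : y ∉ V := fun hyV => by
    linarith [hdiam n V hV x (hballV (Metric.mem_ball_self hpos)) y hyV, mul_comm C ((2 : ℝ) ^ n)]
  refine ⟨n, V, hV, ?_⟩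
  rw [bump_eq_zero hpos.le hyV, sub_zero, div_le_iff₀ (by positivity)]
  have hfar : 2 * 2 ^ n ≤ dist x x₀ := by
    nlinarith [dist_triangle x x₀ y, dist_comm y x₀, mul_le_mul_of_nonneg_left hC hpos.le]
  nlinarith [le_bump hpos.le hballV ⟨y, hyV⟩ hfar]

theorem exists_c0Space_embedding_of_covers {X : Type u} [PseudoMetricSpace X] {C D : ℝ}
    {U : ℤ → Set (Set X)} (hC : 4 ≤ C) (hD₀ : 0 ≤ D) (hpf : ∀ n, PointFinite (U n))
    (hball : ∀ n x, ∃ V ∈ U n, Metric.ball x (2 ^ n) ⊆ V)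
    (hdiam : ∀ n, ∀ V ∈ U n, ∀ x ∈ V, ∀ y ∈ V, dist x y ≤ C * 2 ^ n + D) :
    ∃ (ι : Type u) (f : X → c0Space ι), ∀ x y,
      (dist x y - D) / (2 * C) ≤ dist (f x) (f y) ∧ dist (f x) (f y) ≤ dist x y := by
  rcases isEmpty_or_nonempty X with hX | ⟨⟨x₀⟩⟩
  · exact ⟨PEmpty, isEmptyElim, isEmptyElim⟩
  have hbump : ∀ i : Σ n, U n, ∀ x, 0 ≤ bump x₀ (2 ^ i.1) i.2 x := fun i =>
    bump_nonneg (by positivity) _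
  let f (x : X) : c0Space (Σ n, U n) := c0Space.mk (fun i => bump x₀ (2 ^ i.1) i.2 x)
    fun ε hε => by simpa only [abs_of_nonneg (hbump _ x)] using finite_setOf_le_bump x₀ hpf x hε
  have hlower : ∀ x y, dist y x₀ ≤ dist x x₀ → (dist x y - D) / (2 * C) ≤ dist (f x) (f y) := by
    intro x y hxy
    rcases le_or_gt (dist x y) D with hD | hD
    · exact (div_nonpos_of_nonpos_of_nonneg (sub_nonpos.2 hD) (by linarith)).trans dist_nonneg
    obtain ⟨n, V, hV, hle⟩ := exists_le_bump_sub_bump x₀ hC hD₀ hball hdiam hxy hD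
    refine hle.trans ((le_abs_self _).trans ?_)
    simpa only [f, c0Space.mk_apply, Real.dist_eq] using
      c0Space.dist_apply_le (f x) (f y) ⟨n, V, hV⟩
  refine ⟨Σ n, U n, f, fun x y => ⟨?_, c0Space.dist_le_of_forall dist_nonneg fun i => ?_⟩⟩
  · rcases le_total (dist y x₀) (dist x x₀) with h | h
    · exact hlower x y h
    · simpa only [dist_comm] using hlower y x h
  · simpa only [f, c0Space.mk_apply, NNReal.coe_one, one_mul] using
      (lipschitzWith_bump (x₀ := x₀) (2 ^ i.1) i.2).dist_le_mul x y

theorem exists_pointFinite_cover_balls_of_Δc_le {X : Type*} [PseudoMetricSpace X] {C D : ℝ≥0}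
    (h : ∀ R : ℝ≥0, Δc X R ≤ ((C * R + D : ℝ≥0) : ℝ≥0∞)) {s : ℝ} (hs : 0 < s) :
    ∃ U : Set (Set X), PointFinite U ∧ (∀ x, ∃ V ∈ U, Metric.ball x s ⊆ V) ∧
      ∀ V ∈ U, ∀ x ∈ V, ∀ y ∈ V, dist x y ≤ 4 * (C + 1) * s + D := by
  set R : ℝ≥0 := ⟨4 * s, by positivity⟩
  have hR : (R : ℝ) = 4 * s := rfl
  have hlt : Δc X R < ENNReal.ofReal (4 * (C + 1) * s + D) := by
    refine (h R).trans_lt ?_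
    rw [← ENNReal.ofReal_coe_nnreal, ENNReal.ofReal_lt_ofReal_iff (by positivity)]
    push_cast [hR]
    linarith
  obtain ⟨U, -, hpf, hLeb, hdiam⟩ := exists_cover_of_Δc_lt hlt
  refine ⟨U, hpf, fun x => exists_subset_of_ediam_lt_Leb (lt_of_lt_of_le ?_ hLeb),
    fun V hV x hx y hy => dist_le_of_covDiam_le (by positivity) hdiam.le hV hx hy⟩
  refine (Metric.ediam_le_of_forall_dist_le (C := 2 * s) fun y hy z hz => ?_).trans_lt ?_
  · linarith [dist_triangle_left y z x, Metric.mem_ball'.1 hy, Metric.mem_ball'.1 hz]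
  · rw [← ENNReal.ofReal_coe_nnreal, ENNReal.ofReal_lt_ofReal_iff (by rw [hR]; positivity), hR]
    linarith

theorem exists_coarseEmbedding_c0Space_of_Δc_le {X : Type u} [PseudoMetricSpace X] {C D : ℝ≥0}
    (h : ∀ R : ℝ≥0, Δc X R ≤ ((C * R + D : ℝ≥0) : ℝ≥0∞)) :
    ∃ (ι : Type u) (f : X → c0Space ι), ∀ x y,
      1 / (8 * (C + 1)) * dist x y - D ≤ dist (f x) (f y) ∧
        dist (f x) (f y) ≤ 8 * (C + 1) * dist x y + D := by
  choose U hpf hball hdiam using fun n : ℤ =>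
    exists_pointFinite_cover_balls_of_Δc_le h (s := 2 ^ n) (by positivity)
  obtain ⟨ι, f, hf⟩ := exists_c0Space_embedding_of_covers (C := 4 * (C + 1)) (D := D)
    (by linarith [C.coe_nonneg]) D.coe_nonneg hpf hball hdiam
  have hA : 1 ≤ 8 * ((C : ℝ) + 1) := by linarith [C.coe_nonneg]
  refine ⟨ι, f, fun x y => ⟨le_trans ?_ (hf x y).1, (hf x y).2.trans ?_⟩⟩
  · have := div_le_self D.coe_nonneg hA
    have e : (dist x y - D) / (2 * (4 * (C + 1))) =
        1 / (8 * (C + 1)) * dist x y - D / (8 * (C + 1)) := by ring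
    linarith
  · linarith [le_mul_of_one_le_left (dist_nonneg (x := x) (y := y)) hA, D.coe_nonneg]

theorem stmt18 {X : Type u} [MetricSpace X] :
    ((∃ (ι : Type u) (f : X → c0Space ι) (A : ℝ), 1 ≤ A ∧
        ∀ x y : X, (1 / A) * dist x y ≤ dist (f x) (f y) ∧
          dist (f x) (f y) ≤ A * dist x y) ↔
      ∃ C : ℝ≥0, ∀ R : ℝ≥0, Δc X R ≤ ((C * R : ℝ≥0) : ℝ≥0∞)) ∧
    ((∃ (ι : Type u) (f : X → c0Space ι) (A B : ℝ), 1 ≤ A ∧ 0 ≤ B ∧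
        ∀ x y : X, (1 / A) * dist x y - B ≤ dist (f x) (f y) ∧
          dist (f x) (f y) ≤ A * dist x y + B) ↔
      ∃ C D : ℝ≥0, ∀ R : ℝ≥0, Δc X R ≤ ((C * R + D : ℝ≥0) : ℝ≥0∞)) := by
  refine ⟨⟨?_, ?_⟩, ⟨?_, ?_⟩⟩
  · rintro ⟨ι, f, A, hA, hf⟩
    refine ⟨(8 * A ^ 2).toNNReal, fun R => ?_⟩
    simpa using Δc_le_of_coarseEmbedding_c0Space f (B := 0) (by linarith) le_rfl
      (by simpa using hf) R
  · rintro ⟨C, hC⟩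
    obtain ⟨ι, f, hf⟩ := exists_coarseEmbedding_c0Space_of_Δc_le (D := 0) (by simpa using hC)
    exact ⟨ι, f, 8 * (C + 1), by linarith [C.coe_nonneg], by simpa using hf⟩
  · rintro ⟨ι, f, A, B, hA, hB, hf⟩
    exact ⟨_, _, Δc_le_of_coarseEmbedding_c0Space f (by linarith) hB hf⟩
  · rintro ⟨C, D, hCD⟩
    obtain ⟨ι, f, hf⟩ := exists_coarseEmbedding_c0Space_of_Δc_le hCD
    exact ⟨ι, f, 8 * (C + 1), D, by linarith [C.coe_nonneg], D.coe_nonneg, hf⟩
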